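/- For 0 ≤ k ≤ (n-1)/2, the incomplete q-Chebyshev polynomials of the second kind satisfy the recurrence U_{n+2}^{k+1}(x,s,q) = (1+q^{n+2}) x U_{n+1}^{k+1}(x,s,q) + q^{n+1} s U_n^k(x,s,q). -/

import Mathlib

/-- q-integer [n]_q = (1-q^n)/(1-q). -/
noncomputable def qint (q : ℂ) (n : ℕ) : ℂ := (1 - q ^ n) / (1 - q)

/-- q-factorial [n]_q!. -/
noncomputable def qfact (q : ℂ) (n : ℕ) : ℂ := ∏ i ∈ Finset.range n, qint q (i + 1)

/-- Gaussian (q-binomial) coefficient, 0 for k > n. -/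
noncomputable def qbinom (q : ℂ) (n k : ℕ) : ℂ :=
  if k ≤ n then qfact q n / (qfact q (n - k) * qfact q k) else 0

/-- q-shifted factorial (x;q)_n. -/
noncomputable def qpoch (x q : ℂ) (n : ℕ) : ℂ := ∏ i ∈ Finset.range n, (1 - q ^ i * x)

/-- Partial sum defining incomplete q-Chebyshev polynomials of the second kind:
`Usum x s q n (k+1)` is U_n^k(x,s,q), and `Usum x s q n 0 = 0` is the empty sum (k = -1). -/
noncomputable def Usum (x s q : ℂ) (n m : ℕ) : ℂ :=
  ∑ j ∈ Finset.range m,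
    q ^ (j ^ 2) * qbinom q (n - j) j * (qpoch (-q) q (n - j) / qpoch (-q) q j) *
      s ^ j * x ^ (n - 2 * j)

/-- Partial sum defining incomplete q-Chebyshev polynomials of the first kind:
`Tsum x s q n (k+1)` is T_n^k(x,s,q). -/
noncomputable def Tsum (x s q : ℂ) (n m : ℕ) : ℂ :=
  ∑ j ∈ Finset.range m,
    q ^ (j ^ 2) * (qint q n / qint q (n - j)) * qbinom q (n - j) j *
      (qpoch (-q) q (n - j - 1) / qpoch (-q) q j) * s ^ j * x ^ (n - 2 * j)

/-!
The recurrence holds summand by summand. With `N = n - j` and after cancelling common factors,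
the identity between the summands is
`q^(j+1) (1 + q^(N+1)) [N+1, j+1] = q^(N+1) (1 + q^(j+1)) [N, j] + q^(j+1) (1 + q^(N+j+2)) [N, j+1]`,
the sum of the two q-Pascal rules, one of them multiplied by `q^(N+j+2)`. Since `qbinom`
vanishes above the diagonal, the summand identity holds for every `j`, the cases `n ≤ 2j`
being degenerate.
-/

variable {q : ℂ}

lemma one_sub_pow_ne_zero (hq : ¬IsOfFinOrder q) {m : ℕ} (hm : m ≠ 0) : 1 - q ^ m ≠ 0 :=
  fun h ↦ hq <| isOfFinOrder_iff_pow_eq_one.mpr ⟨m, Nat.pos_of_ne_zero hm, by linear_combination -h⟩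

lemma one_add_pow_ne_zero (hq : ¬IsOfFinOrder q) {m : ℕ} (hm : m ≠ 0) : 1 + q ^ m ≠ 0 :=
  fun h ↦ hq <| isOfFinOrder_iff_pow_eq_one.mpr
    ⟨2 * m, by omega, by rw [pow_mul', show q ^ m = -1 by linear_combination h]; norm_num⟩

lemma qint_add (a b : ℕ) : qint q (a + b) = qint q a + q ^ a * qint q b := by
  simp only [qint]; ring

lemma qint_ne_zero (hq : ¬IsOfFinOrder q) {m : ℕ} (hm : m ≠ 0) : qint q m ≠ 0 :=
  div_ne_zero (one_sub_pow_ne_zero hq hm) (by simpa using one_sub_pow_ne_zero hq one_ne_zero)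

lemma qfact_zero : qfact q 0 = 1 :=
  Finset.prod_range_zero _

lemma qfact_succ (m : ℕ) : qfact q (m + 1) = qfact q m * qint q (m + 1) :=
  Finset.prod_range_succ _ _

lemma qfact_ne_zero (hq : ¬IsOfFinOrder q) (m : ℕ) : qfact q m ≠ 0 :=
  Finset.prod_ne_zero_iff.mpr fun i _ ↦ qint_ne_zero hq i.succ_ne_zero

lemma qpoch_neg_succ (m : ℕ) : qpoch (-q) q (m + 1) = qpoch (-q) q m * (1 + q ^ (m + 1)) := by
  rw [qpoch, Finset.prod_range_succ, ← qpoch]; ring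

lemma qpoch_neg_ne_zero (hq : ¬IsOfFinOrder q) (m : ℕ) : qpoch (-q) q m ≠ 0 :=
  Finset.prod_ne_zero_iff.mpr fun i _ ↦ by
    simpa [pow_succ] using one_add_pow_ne_zero hq i.succ_ne_zero

lemma qbinom_of_lt {n k : ℕ} (h : n < k) : qbinom q n k = 0 :=
  if_neg (Nat.not_le.mpr h)

lemma qbinom_add_left (a b : ℕ) :
    qbinom q (a + b) a = qfact q (a + b) / (qfact q b * qfact q a) := by
  rw [qbinom, if_pos (Nat.le_add_right a b), Nat.add_sub_cancel_left]

lemma qbinom_zero_right (hq : ¬IsOfFinOrder q) (n : ℕ) : qbinom q n 0 = 1 := by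
  rw [qbinom, if_pos n.zero_le, Nat.sub_zero, qfact_zero, mul_one,
    div_self (qfact_ne_zero hq n)]

lemma qbinom_self (hq : ¬IsOfFinOrder q) (n : ℕ) : qbinom q n n = 1 := by
  rw [qbinom, if_pos le_rfl, Nat.sub_self, qfact_zero, one_mul,
    div_self (qfact_ne_zero hq n)]

lemma qbinom_pascal_of_lt (hq : ¬IsOfFinOrder q) {n k : ℕ} (h : k < n) :
    qbinom q (n + 1) (k + 1) = qbinom q n k + q ^ (k + 1) * qbinom q n (k + 1) ∧
      q ^ (k + 1) * qbinom q (n + 1) (k + 1) =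
        q ^ (n + 1) * qbinom q n k + q ^ (k + 1) * qbinom q n (k + 1) := by
  obtain ⟨m, rfl⟩ : ∃ m, n = k + 1 + m := ⟨n - (k + 1), by omega⟩
  have e₁ : k + 1 + m + 1 = (k + 1) + (m + 1) := by ring
  have e₂ : k + 1 + m = k + (m + 1) := by ring
  have hk := qint_ne_zero hq (Nat.succ_ne_zero k)
  have hm := qint_ne_zero hq (Nat.succ_ne_zero m)
  have hK := qfact_ne_zero hq k
  have hM := qfact_ne_zero hq m
  rw [e₁, qbinom_add_left, qbinom_add_left, ← e₁, e₂, qbinom_add_left, ← e₂,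
    qfact_succ (k + 1 + m), qfact_succ m, qfact_succ k]
  have hsum₁ := qint_add (q := q) (k + 1) (m + 1)
  have hsum₂ := qint_add (q := q) (m + 1) (k + 1)
  rw [show k + 1 + (m + 1) = k + 1 + m + 1 by ring] at hsum₁
  rw [show m + 1 + (k + 1) = k + 1 + m + 1 by ring] at hsum₂
  constructor
  · rw [hsum₁]; field_simp
  · rw [hsum₂]; field_simp; ring

lemma qbinom_succ_succ (hq : ¬IsOfFinOrder q) (n k : ℕ) :
    qbinom q (n + 1) (k + 1) = qbinom q n k + q ^ (k + 1) * qbinom q n (k + 1) := by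
  rcases lt_trichotomy k n with h | rfl | h
  · exact (qbinom_pascal_of_lt hq h).1
  · rw [qbinom_self hq, qbinom_self hq, qbinom_of_lt k.lt_succ_self, mul_zero, add_zero]
  · rw [qbinom_of_lt (by omega), qbinom_of_lt h, qbinom_of_lt (by omega)]; ring

lemma pow_mul_qbinom_succ_succ (hq : ¬IsOfFinOrder q) (n k : ℕ) :
    q ^ (k + 1) * qbinom q (n + 1) (k + 1) =
      q ^ (n + 1) * qbinom q n k + q ^ (k + 1) * qbinom q n (k + 1) := by
  rcases lt_trichotomy k n with h | rfl | h
  · exact (qbinom_pascal_of_lt hq h).2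
  · rw [qbinom_self hq, qbinom_self hq, qbinom_of_lt k.lt_succ_self]; ring
  · rw [qbinom_of_lt (by omega), qbinom_of_lt h, qbinom_of_lt (by omega)]; ring

noncomputable def Uterm (x s q : ℂ) (n j : ℕ) : ℂ :=
  q ^ (j ^ 2) * qbinom q (n - j) j * (qpoch (-q) q (n - j) / qpoch (-q) q j) *
    s ^ j * x ^ (n - 2 * j)

lemma Usum_eq_sum_Uterm (x s : ℂ) (n m : ℕ) :
    Usum x s q n m = ∑ j ∈ Finset.range m, Uterm x s q n j :=
  rfl

lemma Uterm_of_lt (x s : ℂ) {n j : ℕ} (h : n < 2 * j) : Uterm x s q n j = 0 := by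
  rw [Uterm, qbinom_of_lt (by omega)]; ring

lemma Uterm_two_mul_add (x s : ℂ) (j d : ℕ) :
    Uterm x s q (2 * j + d) j =
      q ^ (j ^ 2) * qbinom q (j + d) j * (qpoch (-q) q (j + d) / qpoch (-q) q j) *
        s ^ j * x ^ d := by
  rw [Uterm, show 2 * j + d - j = j + d by omega, Nat.add_sub_cancel_left]

lemma Uterm_succ_zero (hq : ¬IsOfFinOrder q) (x s : ℂ) (n : ℕ) :
    Uterm x s q (n + 1) 0 = (1 + q ^ (n + 1)) * x * Uterm x s q n 0 := by
  simp only [Uterm, Nat.sub_zero, Nat.mul_zero, qbinom_zero_right hq, qpoch_neg_succ]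
  ring

lemma pow_mul_one_add_pow_mul_qbinom_succ_succ (hq : ¬IsOfFinOrder q) (n k : ℕ) :
    q ^ (k + 1) * (1 + q ^ (n + 1)) * qbinom q (n + 1) (k + 1) =
      q ^ (n + 1) * (1 + q ^ (k + 1)) * qbinom q n k +
        q ^ (k + 1) * (1 + q ^ (n + k + 2)) * qbinom q n (k + 1) := by
  linear_combination pow_mul_qbinom_succ_succ hq n k + q ^ (n + k + 2) * qbinom_succ_succ hq n k

lemma Uterm_succ_succ (hq : ¬IsOfFinOrder q) (x s : ℂ) (n j : ℕ) :
    Uterm x s q (n + 2) (j + 1) =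
      (1 + q ^ (n + 2)) * x * Uterm x s q (n + 1) (j + 1) + q ^ (n + 1) * s * Uterm x s q n j := by
  rcases lt_trichotomy n (2 * j) with h | rfl | h
  · rw [Uterm_of_lt (n := n + 2) x s (by omega), Uterm_of_lt (n := n + 1) x s (by omega),
      Uterm_of_lt x s h]
    ring
  · rw [Uterm_of_lt (n := 2 * j + 1) x s (by omega), show 2 * j + 2 = 2 * (j + 1) + 0 by ring,
      ← add_zero (2 * j), Uterm_two_mul_add, Uterm_two_mul_add]
    simp only [add_zero, qbinom_self hq, div_self (qpoch_neg_ne_zero hq _)]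
    ring
  · obtain ⟨d, rfl⟩ := Nat.exists_eq_add_of_lt h
    rw [show 2 * j + d + 1 + 2 = 2 * (j + 1) + (d + 1) by ring,
      show 2 * j + d + 1 + 1 = 2 * (j + 1) + d by ring,
      show 2 * j + d + 1 = 2 * j + (d + 1) by ring,
      Uterm_two_mul_add, Uterm_two_mul_add, Uterm_two_mul_add,
      show j + 1 + (d + 1) = j + d + 1 + 1 by ring, show j + 1 + d = j + d + 1 by ring,
      show j + (d + 1) = j + d + 1 by ring]
    have hinv : (qpoch (-q) q j)⁻¹ = (1 + q ^ (j + 1)) * (qpoch (-q) q (j + 1))⁻¹ := by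
      rw [qpoch_neg_succ, mul_inv, mul_left_comm,
        mul_inv_cancel₀ (one_add_pow_ne_zero hq j.succ_ne_zero), mul_one]
    simp only [div_eq_mul_inv, hinv, qpoch_neg_succ (j + d + 1)]
    linear_combination (q ^ (j ^ 2) * q ^ j * qpoch (-q) q (j + d + 1) *
        (qpoch (-q) q (j + 1))⁻¹ * s ^ (j + 1) * x ^ (d + 1)) *
      pow_mul_one_add_pow_mul_qbinom_succ_succ hq (j + d + 1) j

theorem Usum_succ_succ (hq : ¬IsOfFinOrder q) (x s : ℂ) (n m : ℕ) :
    Usum x s q (n + 2) (m + 1) =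
      (1 + q ^ (n + 2)) * x * Usum x s q (n + 1) (m + 1) + q ^ (n + 1) * s * Usum x s q n m := by
  induction m with
  | zero =>
    simp only [Usum_eq_sum_Uterm, zero_add, Finset.sum_range_one, Finset.sum_range_zero]
    rw [Uterm_succ_zero hq x s (n + 1)]
    ring
  | succ m ih =>
    simp only [Usum_eq_sum_Uterm] at ih ⊢
    rw [Finset.sum_range_succ (Uterm x s q (n + 2)), ih,
      Finset.sum_range_succ (Uterm x s q (n + 1)) (m + 1), Finset.sum_range_succ (Uterm x s q n) m,
      Uterm_succ_succ hq]
    ring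

theorem Uinc_rec_general (q : ℂ) (hq1 : ‖q‖ < 1)
    (x s : ℂ) (n k : ℕ) :
    Usum x s q (n + 2) (k + 2) =
      (1 + q ^ (n + 2)) * x * Usum x s q (n + 1) (k + 2) +
        q ^ (n + 1) * s * Usum x s q n (k + 1) :=
  Usum_succ_succ (fun h ↦ hq1.ne h.norm_eq_one) x s n (k + 1)

theorem Uinc_rec (q : ℂ) (hq0 : 0 < ‖q‖) (hq1 : ‖q‖ < 1)
    (x s : ℂ) (n k : ℕ) (hk : 2 * k + 1 ≤ n) :
    Usum x s q (n + 2) (k + 2) =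
      (1 + q ^ (n + 2)) * x * Usum x s q (n + 1) (k + 2) +
        q ^ (n + 1) * s * Usum x s q n (k + 1) :=
  Uinc_rec_general q hq1 x s n k
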